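/- In λS, for all closed t0, t1 with k ∉ FV(t1) and x ∉ FV(t0) implied only where stated: the term (λx.Sk.t0) t1 is not stuck when t1 is not a normal form, whereas Sk.((λx.t0) t1) is stuck; hence (λx.Sk.t0) Ω diverges while Sk.((λx.t0) Ω) is a stuck normal form, so these two terms are not contextually equivalent under the relaxed semantics ≃. -/

import Mathlib

/-- Terms of the calculus λS: variables, abstractions, applications,
    shift (Sk.t) and reset (⟨t⟩). -/
inductive Tm : Type
  | var : ℕ → Tm
  | lam : ℕ → Tm → Tm
  | app : Tm → Tm → Tm
  | shift : ℕ → Tm → Tm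
  | reset : Tm → Tm
deriving DecidableEq

namespace Tm

/-- Values are λ-abstractions. -/
def IsValue : Tm → Prop
  | lam _ _ => True
  | _ => False

/-- Free variables. -/
def fv : Tm → Finset ℕ
  | var x => {x}
  | lam x t => fv t \ {x}
  | app a b => fv a ∪ fv b
  | shift k t => fv t \ {k}
  | reset t => fv t

def Closed (t : Tm) : Prop := fv t = ∅

/-- Substitution t{v/x} (substituted terms are closed values, so no
    capture can occur). -/
def subst : Tm → ℕ → Tm → Tm
  | var y, x, v => if y = x then v else var y
  | lam y t, x, v => if y = x then lam y t else lam y (subst t x v)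
  | app a b, x, v => app (subst a x v) (subst b x v)
  | shift k t, x, v => if k = x then shift k t else shift k (subst t x v)
  | reset t, x, v => reset (subst t x v)

end Tm

/-- (Evaluation) contexts F ::= [] | v F | F t | ⟨F⟩, represented outside-in.
    Pure contexts E are those with no reset constructor. -/
inductive Ctx : Type
  | hole : Ctx
  | appR : Tm → Ctx → Ctx   -- v F
  | appL : Ctx → Tm → Ctx   -- F t
  | reset : Ctx → Ctx       -- ⟨F⟩
deriving DecidableEq

namespace Ctx

def plug : Ctx → Tm → Tm
  | hole, t => t
  | appR v F, t => Tm.app v (F.plug t)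
  | appL F u, t => Tm.app (F.plug t) u
  | reset F, t => Tm.reset (F.plug t)

/-- Well-formedness: in `v F` the term v must be a value. -/
def Wf : Ctx → Prop
  | hole => True
  | appR v F => v.IsValue ∧ F.Wf
  | appL F _ => F.Wf
  | reset F => F.Wf

/-- Pure contexts contain no reset around the hole. -/
def Pure : Ctx → Prop
  | hole => True
  | appR _ F => F.Pure
  | appL F _ => F.Pure
  | reset _ => False

def fv : Ctx → Finset ℕ
  | hole => ∅
  | appR v F => v.fv ∪ F.fv
  | appL F u => F.fv ∪ u.fv
  | reset F => F.fv

/-- Context composition: (F.comp G)[t] = F[G[t]]. -/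
def comp : Ctx → Ctx → Ctx
  | hole, G => G
  | appR v F, G => appR v (F.comp G)
  | appL F u, G => appL (F.comp G) u
  | reset F, G => reset (F.comp G)

end Ctx

/-- A canonical fresh variable not occurring in the finite set s. -/
def fresh (s : Finset ℕ) : ℕ := s.sup id + 1

/-- The reduction relation →v of λS. -/
inductive Red : Tm → Tm → Prop
  | beta (F : Ctx) (x : ℕ) (t v : Tm) :
      F.Wf → v.IsValue →
      Red (F.plug (Tm.app (Tm.lam x t) v)) (F.plug (t.subst x v))
  | shift (F E : Ctx) (k : ℕ) (t : Tm) :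
      F.Wf → E.Wf → E.Pure →
      Red (F.plug (Tm.reset (E.plug (Tm.shift k t))))
          (F.plug (Tm.reset (t.subst k
            (Tm.lam (fresh E.fv) (Tm.reset (E.plug (Tm.var (fresh E.fv))))))))
  | reset (F : Ctx) (v : Tm) :
      F.Wf → v.IsValue →
      Red (F.plug (Tm.reset v)) (F.plug v)

/-- A term is stuck if it is not a value and admits no reduction step. -/
def Stuck (t : Tm) : Prop := ¬ t.IsValue ∧ ∀ t', ¬ Red t t'

/-- A normal form is a value or a stuck term. -/
def NormalForm (t : Tm) : Prop := t.IsValue ∨ Stuck t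

/-- Reflexive-transitive closure of reduction. -/
def Steps : Tm → Tm → Prop := Relation.ReflTransGen Red

/-- Evaluation: t ⇓ t' when t →v* t' and t' is irreducible. -/
def Evals (t t' : Tm) : Prop := Steps t t' ∧ ∀ u, ¬ Red t' u

/-- Redexes: (λx.t) v, ⟨E[Sk.t]⟩ with E pure, and ⟨v⟩. -/
def IsRedex (r : Tm) : Prop :=
  (∃ x t v, Tm.IsValue v ∧ r = Tm.app (Tm.lam x t) v) ∨
  (∃ E : Ctx, ∃ k t, E.Wf ∧ E.Pure ∧ r = Tm.reset (E.plug (Tm.shift k t))) ∨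
  (∃ v, Tm.IsValue v ∧ r = Tm.reset v)

/-- Divergence: an infinite reduction sequence. -/
def Diverges (t : Tm) : Prop := ∃ f : ℕ → Tm, f 0 = t ∧ ∀ n, Red (f n) (f (n + 1))

/-- Ω = (λx.x x)(λx.x x). -/
def Omega : Tm :=
  Tm.app (Tm.lam 0 (Tm.app (Tm.var 0) (Tm.var 0)))
         (Tm.lam 0 (Tm.app (Tm.var 0) (Tm.var 0)))

/-- Arbitrary one-hole contexts C. -/
inductive GCtx : Type
  | hole : GCtx
  | lam : ℕ → GCtx → GCtx
  | appL : GCtx → Tm → GCtx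
  | appR : Tm → GCtx → GCtx
  | shift : ℕ → GCtx → GCtx
  | reset : GCtx → GCtx

def GCtx.plug : GCtx → Tm → Tm
  | hole, t => t
  | lam x C, t => Tm.lam x (C.plug t)
  | appL C u, t => Tm.app (C.plug t) u
  | appR u C, t => Tm.app u (C.plug t)
  | shift k C, t => Tm.shift k (C.plug t)
  | reset C, t => Tm.reset (C.plug t)

/-- Contextual equivalence for the relaxed semantics. -/
def CtxEquiv (t0 t1 : Tm) : Prop :=
  ∀ C : GCtx, (C.plug t0).Closed → (C.plug t1).Closed →
    ((∃ v, v.IsValue ∧ Evals (C.plug t0) v) ↔ (∃ v, v.IsValue ∧ Evals (C.plug t1) v)) ∧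
    ((∃ s, Stuck s ∧ Evals (C.plug t0) s) ↔ (∃ s, Stuck s ∧ Evals (C.plug t1) s))

/-- Contextual equivalence for the original (top-level reset) semantics. -/
def CtxEquivP (t0 t1 : Tm) : Prop :=
  ∀ C : GCtx, (Tm.reset (C.plug t0)).Closed → (Tm.reset (C.plug t1)).Closed →
    ((∃ v, v.IsValue ∧ Evals (Tm.reset (C.plug t0)) v) ↔
     (∃ v, v.IsValue ∧ Evals (Tm.reset (C.plug t1)) v))

/-- The term-generating closure of a relation R on closed terms. -/
inductive TmClo (R : Tm → Tm → Prop) : Tm → Tm → Prop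
  | base {t t'} : R t t' → TmClo R t t'
  | var (x : ℕ) : TmClo R (Tm.var x) (Tm.var x)
  | lam {t t'} (x : ℕ) : TmClo R t t' → TmClo R (Tm.lam x t) (Tm.lam x t')
  | app {a a' b b'} : TmClo R a a' → TmClo R b b' →
      TmClo R (Tm.app a b) (Tm.app a' b')
  | shift {t t'} (k : ℕ) : TmClo R t t' → TmClo R (Tm.shift k t) (Tm.shift k t')
  | reset {t t'} : TmClo R t t' → TmClo R (Tm.reset t) (Tm.reset t')

/-! The function part of `(λx.Sk.t0) Ω` is a value, so each of its steps is a step of `Ω`, and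
`Ω` only reduces to itself: the term diverges and never reaches a normal form. No redex plugged
into an evaluation context yields a shift, so `Sk.((λx.t0) Ω)` is stuck at once, and the empty
context separates the two terms. -/

theorem Ctx.plug_comp (F G : Ctx) (t : Tm) : (F.comp G).plug t = F.plug (G.plug t) := by
  induction F <;> simp [Ctx.comp, Ctx.plug, *]

theorem Ctx.Wf.comp {F G : Ctx} (hF : F.Wf) (hG : G.Wf) : (F.comp G).Wf := by
  induction F <;> simp_all [Ctx.comp, Ctx.Wf]

theorem Tm.isValue_lam (x : ℕ) (t : Tm) : (Tm.lam x t).IsValue := trivial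

theorem Ctx.isValue_of_plug_eq {F : Ctx} {t v : Tm} (h : F.plug t = v) (hv : v.IsValue) :
    t.IsValue := by
  subst h; cases F <;> simp_all [Ctx.plug, Tm.IsValue]

theorem Ctx.eq_of_plug_eq_shift {F : Ctx} {t u : Tm} {k : ℕ} (h : F.plug t = Tm.shift k u) :
    t = Tm.shift k u := by
  cases F <;> simp_all [Ctx.plug]

theorem Red.plug {t t' : Tm} {F : Ctx} (hF : F.Wf) (h : Red t t') : Red (F.plug t) (F.plug t') := by
  cases h with
  | beta G x t v hG hv =>
    simpa only [Ctx.plug_comp] using Red.beta _ x t v (hF.comp hG) hv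
  | shift G E k t hG hE hP =>
    simpa only [Ctx.plug_comp] using Red.shift _ E k t (hF.comp hG) hE hP
  | reset G v hG hv =>
    simpa only [Ctx.plug_comp] using Red.reset _ v (hF.comp hG) hv

theorem Red.app_right {v t t' : Tm} (hv : v.IsValue) (h : Red t t') :
    Red (Tm.app v t) (Tm.app v t') :=
  h.plug (F := Ctx.appR v Ctx.hole) ⟨hv, trivial⟩

theorem exists_red_of_not_normalForm {t : Tm} (h : ¬ NormalForm t) : ∃ t', Red t t' := by
  simp only [NormalForm, Stuck, not_or, not_and, not_forall, not_not] at h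
  exact h.2 h.1

theorem stuck_shift (k : ℕ) (t : Tm) : Stuck (Tm.shift k t) := by
  refine ⟨id, fun u h => ?_⟩
  generalize hs : Tm.shift k t = s at h
  cases h <;> simpa using Ctx.eq_of_plug_eq_shift hs.symm

theorem Red.eq_subst_of_beta {x : ℕ} {t v u : Tm} (hv : v.IsValue)
    (h : Red (Tm.app (Tm.lam x t) v) u) : u = t.subst x v := by
  generalize hr : Tm.app (Tm.lam x t) v = r at h
  cases h with
  | beta F y s w _ _ =>
    rcases F with _ | ⟨_, F⟩ | ⟨F, _⟩ | F <;>
      simp only [Ctx.plug, Tm.app.injEq, Tm.lam.injEq, reduceCtorEq] at hr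
    · obtain ⟨⟨rfl, rfl⟩, rfl⟩ := hr; rfl
    · exact nomatch Ctx.isValue_of_plug_eq hr.2.symm hv
    · exact nomatch Ctx.isValue_of_plug_eq hr.1.symm (Tm.isValue_lam x t)
  | shift F _ _ _ _ _ _ | reset F _ _ _ =>
    rcases F with _ | ⟨_, F⟩ | ⟨F, _⟩ | F <;>
      simp only [Ctx.plug, Tm.app.injEq, reduceCtorEq] at hr
    · exact nomatch Ctx.isValue_of_plug_eq hr.2.symm hv
    · exact nomatch Ctx.isValue_of_plug_eq hr.1.symm (Tm.isValue_lam x t)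

theorem Red.app_right_inv {v t u : Tm} (hv : v.IsValue) (ht : ¬ t.IsValue)
    (h : Red (Tm.app v t) u) : ∃ t', Red t t' ∧ u = Tm.app v t' := by
  generalize hr : Tm.app v t = r at h
  cases h with
  | beta F y s w hF hw =>
    rcases F with _ | ⟨_, F⟩ | ⟨F, _⟩ | F <;>
      simp only [Ctx.plug, Tm.app.injEq, reduceCtorEq] at hr
    · exact absurd (hr.2 ▸ hw) ht
    · obtain ⟨rfl, rfl⟩ := hr
      exact ⟨_, .beta F y s w hF.2 hw, rfl⟩
    · exact nomatch Ctx.isValue_of_plug_eq hr.1.symm hv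
  | shift F E k s hF hE hP =>
    rcases F with _ | ⟨_, F⟩ | ⟨F, _⟩ | F <;>
      simp only [Ctx.plug, Tm.app.injEq, reduceCtorEq] at hr
    · obtain ⟨rfl, rfl⟩ := hr
      exact ⟨_, .shift F E k s hF.2 hE hP, rfl⟩
    · exact nomatch Ctx.isValue_of_plug_eq hr.1.symm hv
  | reset F w hF hw =>
    rcases F with _ | ⟨_, F⟩ | ⟨F, _⟩ | F <;>
      simp only [Ctx.plug, Tm.app.injEq, reduceCtorEq] at hr
    · obtain ⟨rfl, rfl⟩ := hr
      exact ⟨_, .reset F w hF.2 hw, rfl⟩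
    · exact nomatch Ctx.isValue_of_plug_eq hr.1.symm hv

theorem red_omega_iff {u : Tm} : Red Omega u ↔ u = Omega := by
  refine ⟨fun h => Red.eq_subst_of_beta (Tm.isValue_lam _ _) h, ?_⟩
  rintro rfl
  exact Red.beta Ctx.hole 0 _ _ trivial trivial

theorem red_app_omega_iff {v u : Tm} (hv : v.IsValue) :
    Red (Tm.app v Omega) u ↔ u = Tm.app v Omega := by
  refine ⟨fun h => ?_, fun h => h ▸ Red.app_right hv (red_omega_iff.2 rfl)⟩
  obtain ⟨t', ht', rfl⟩ := Red.app_right_inv hv id h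
  rw [red_omega_iff.1 ht']

theorem diverges_app_omega {v : Tm} (hv : v.IsValue) : Diverges (Tm.app v Omega) :=
  ⟨fun _ => Tm.app v Omega, rfl, fun _ => (red_app_omega_iff hv).2 rfl⟩

theorem eq_of_steps_app_omega {v s : Tm} (hv : v.IsValue) (h : Steps (Tm.app v Omega) s) :
    s = Tm.app v Omega := by
  induction h with
  | refl => rfl
  | tail _ h ih => exact (red_app_omega_iff hv).1 (ih ▸ h)

theorem not_evals_app_omega {v : Tm} (hv : v.IsValue) (s : Tm) :
    ¬ Evals (Tm.app v Omega) s := by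
  rintro ⟨hs, hirred⟩
  rw [eq_of_steps_app_omega hv hs] at hirred
  exact hirred _ ((red_app_omega_iff hv).2 rfl)

theorem not_ctxEquiv_of_stuck {t u : Tm} (ht : t.Closed) (hu : u.Closed) (hstuck : Stuck u)
    (hnot : ∀ s, ¬ Evals t s) : ¬ CtxEquiv t u := fun h =>
  have ⟨s, _, hs⟩ := (h GCtx.hole ht hu).2.2 ⟨u, hstuck, .refl, hstuck.2⟩
  hnot s hs

theorem fv_omega : Omega.fv = ∅ := by decide

theorem s_tail_not_relaxed_general (t0 t1 : Tm) (x k : ℕ)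
    (h0 : (Tm.lam x (Tm.shift k t0)).Closed) :
    (¬ NormalForm t1 → ¬ Stuck (Tm.app (Tm.lam x (Tm.shift k t0)) t1)) ∧
    Stuck (Tm.shift k (Tm.app (Tm.lam x t0) t1)) ∧
    Diverges (Tm.app (Tm.lam x (Tm.shift k t0)) Omega) ∧
    Stuck (Tm.shift k (Tm.app (Tm.lam x t0) Omega)) ∧
    NormalForm (Tm.shift k (Tm.app (Tm.lam x t0) Omega)) ∧
    ¬ CtxEquiv (Tm.app (Tm.lam x (Tm.shift k t0)) Omega)
               (Tm.shift k (Tm.app (Tm.lam x t0) Omega)) := by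
  have hv := Tm.isValue_lam x (Tm.shift k t0)
  refine ⟨fun ht1 hstuck => ?_, stuck_shift _ _, diverges_app_omega hv, stuck_shift _ _,
    .inr (stuck_shift _ _), not_ctxEquiv_of_stuck ?_ ?_ (stuck_shift _ _) (not_evals_app_omega hv)⟩
  · obtain ⟨t1', h⟩ := exists_red_of_not_normalForm ht1
    exact hstuck.2 _ (Red.app_right hv h)
  · simpa [Tm.Closed, Tm.fv, fv_omega] using h0
  · simpa [Tm.Closed, Tm.fv, fv_omega, sdiff_sdiff_comm] using h0

/-- (λx.Sk.t0) t1 is not stuck when t1 is not a normal form,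
    whereas Sk.((λx.t0) t1) is stuck; hence (λx.Sk.t0) Ω diverges while
    Sk.((λx.t0) Ω) is a stuck normal form, and the two terms are not
    related by the relaxed contextual equivalence. -/
theorem s_tail_not_relaxed (t0 t1 : Tm) (x k : ℕ)
    (h0 : (Tm.lam x (Tm.shift k t0)).Closed) (h1 : t1.Closed)
    (hk : k ∉ t1.fv) :
    (¬ NormalForm t1 → ¬ Stuck (Tm.app (Tm.lam x (Tm.shift k t0)) t1)) ∧
    Stuck (Tm.shift k (Tm.app (Tm.lam x t0) t1)) ∧
    Diverges (Tm.app (Tm.lam x (Tm.shift k t0)) Omega) ∧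
    Stuck (Tm.shift k (Tm.app (Tm.lam x t0) Omega)) ∧
    NormalForm (Tm.shift k (Tm.app (Tm.lam x t0) Omega)) ∧
    ¬ CtxEquiv (Tm.app (Tm.lam x (Tm.shift k t0)) Omega)
               (Tm.shift k (Tm.app (Tm.lam x t0) Omega)) :=
  s_tail_not_relaxed_general t0 t1 x k h0
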